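/- arXiv:2211.07154 — 4 statements merged into one kernel-verified Lean document; each statement's English description precedes it below -/
import Mathlib

section
/- Let G be a finite graph, A, B ⊆ V(G), let S be an (A,B)-separator, and let S' be an important (A,B)-separator that dominates S and has minimum size among all important (A,B)-separators that dominate S. Then S' is linked into S ∩ (R_G(A,S') ∪ S'). -/
open SimpleGraph

variable {V ι : Type*}

/-- The torso of `G` on a vertex set `X`: vertices `u ≠ v` of `X` are adjacent iff there is a
`u`–`v` walk in `G` all of whose internal vertices lie outside `X`. -/
def torsoGraph (G : SimpleGraph V) (X : Set V) : SimpleGraph V where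
  Adj u v := u ≠ v ∧ u ∈ X ∧ v ∈ X ∧
    ∃ p : G.Walk u v, ∀ w ∈ p.support, w = u ∨ w = v ∨ w ∉ X
  symm := ⟨by
    rintro u v ⟨hne, hu, hv, p, hp⟩
    refine ⟨hne.symm, hv, hu, p.reverse, ?_⟩
    intro w hw
    rw [SimpleGraph.Walk.support_reverse, List.mem_reverse] at hw
    rcases hp w hw with h | h | h
    · exact Or.inr (Or.inl h)
    · exact Or.inl h
    · exact Or.inr (Or.inr h)⟩
  loopless := ⟨fun _ h => h.1 rfl⟩

/-- `(T, bag)` is a tree decomposition of `G`. -/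
structure IsTreeDecomp (G : SimpleGraph V) (T : SimpleGraph ι) (bag : ι → Set V) : Prop where
  tree : T.IsTree
  mem_bag : ∀ v : V, ∃ t, v ∈ bag t
  edge_bag : ∀ ⦃u v : V⦄, G.Adj u v → ∃ t, u ∈ bag t ∧ v ∈ bag t
  conn : ∀ v : V, (T.induce {t | v ∈ bag t}).Connected

/-- `(X, (T, bag))` is a torso tree decomposition in `G`, i.e. `(T, bag)` is a tree
decomposition of `torsoGraph G X`. -/
structure IsTorsoTreeDecomp (G : SimpleGraph V) (X : Set V)
    (T : SimpleGraph ι) (bag : ι → Set V) : Prop where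
  tree : T.IsTree
  bag_subset : ∀ t, bag t ⊆ X
  mem_bag : ∀ v ∈ X, ∃ t, v ∈ bag t
  edge_bag : ∀ ⦃u v : V⦄, (torsoGraph G X).Adj u v → ∃ t, u ∈ bag t ∧ v ∈ bag t
  conn : ∀ v ∈ X, (T.induce {t | v ∈ bag t}).Connected

/-- `G` has treewidth at most `k`. -/
def HasTreewidthAtMost (G : SimpleGraph V) (k : ℕ) : Prop :=
  ∃ (n : ℕ) (T : SimpleGraph (Fin n)) (bag : Fin n → Set V),
    IsTreeDecomp G T bag ∧ ∀ t, (bag t).ncard ≤ k + 1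

/-- `S` is an `(X, Y)`-separator in `G`: every walk from `X` to `Y` meets `S`. -/
def IsSep (G : SimpleGraph V) (X Y S : Set V) : Prop :=
  ∀ ⦃x y : V⦄, x ∈ X → y ∈ Y → ∀ p : G.Walk x y, ∃ s ∈ S, s ∈ p.support

/-- The maximum number of vertex-disjoint `X`–`Y` paths; by Menger's theorem this equals the
minimum size of an `(X, Y)`-separator, which is how we define it. -/
noncomputable def flowG (G : SimpleGraph V) (X Y : Set V) : ℕ :=
  sInf (Set.ncard '' {S : Set V | IsSep G X Y S})

/-- `X` is linked into `Y`. -/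
def LinkedInto (G : SimpleGraph V) (X Y : Set V) : Prop :=
  flowG G X Y = X.ncard

/-- `X` is strictly linked into `Y`. -/
def StrictlyLinkedInto (G : SimpleGraph V) (X Y : Set V) : Prop :=
  LinkedInto G X Y ∧
    ∀ S : Set V, IsSep G X Y S → S.ncard = X.ncard → S = X ∨ S = Y

/-- `R_G(X, S)`: the set of vertices of `G \ S` reachable from `X \ S`. -/
def reachG (G : SimpleGraph V) (X S : Set V) : Set V :=
  {v | ∃ x ∈ X, x ∉ S ∧ ∃ p : G.Walk x v, ∀ w ∈ p.support, w ∉ S}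

/-- `S` is a minimal `(X, Y)`-separator. -/
def IsMinimalSep (G : SimpleGraph V) (X Y S : Set V) : Prop :=
  IsSep G X Y S ∧ ∀ S' : Set V, S' ⊂ S → ¬ IsSep G X Y S'

/-- `S` is an important `(A, B)`-separator. -/
def IsImportantSep (G : SimpleGraph V) (A B S : Set V) : Prop :=
  IsMinimalSep G A B S ∧
    ¬ ∃ S' : Set V, IsSep G A B S' ∧ S'.ncard ≤ S.ncard ∧ reachG G A S ⊂ reachG G A S'

/-- The important `(A, B)`-separator `S'` dominates the `(A, B)`-separator `S`. -/
def DominatesSep (G : SimpleGraph V) (A B S S' : Set V) : Prop :=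
  IsImportantSep G A B S' ∧ S'.ncard ≤ S.ncard ∧ reachG G A S ⊆ reachG G A S'

/-- `(A, S, B)` is a separation of `G`. -/
structure IsSeparation (G : SimpleGraph V) (A S B : Set V) : Prop where
  disjoint_AS : Disjoint A S
  disjoint_AB : Disjoint A B
  disjoint_SB : Disjoint S B
  union_eq : A ∪ S ∪ B = Set.univ
  no_adj : ∀ ⦃a b : V⦄, a ∈ A → b ∈ B → ¬ G.Adj a b

open Classical in
/-- The flow potential `flp_G(X, Y)`. -/
noncomputable def flpG (G : SimpleGraph V) (X Y : Set V) : ℕ :=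
  if X = Set.univ then X.ncard
  else sInf {n : ℕ | ∃ A S B : Set V, IsSeparation G A S B ∧
    X ⊆ A ∪ S ∧ Y ⊆ B ∪ S ∧ B.Nonempty ∧ S.ncard = n}

/-- The graph consisting of a clique on `S` (and no other edges). -/
def cliqueOn (S : Set V) : SimpleGraph V where
  Adj u v := u ≠ v ∧ u ∈ S ∧ v ∈ S
  symm := ⟨fun _ _ ⟨h, hu, hv⟩ => ⟨h.symm, hv, hu⟩⟩
  loopless := ⟨fun _ h => h.1 rfl⟩

/-- `G ⊗ S`: the graph obtained from `G` by making `S` a clique. -/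
def addCliqueG (G : SimpleGraph V) (S : Set V) : SimpleGraph V := G ⊔ cliqueOn S

/-- `(G, Ws, k)` is an instance of Partitioned Subset Treewidth: `Ws` is a finite nonempty
family of terminal cliques, `k ≥ 1`, each terminal clique being a clique of `G` of size at
most `k + 1`. -/
def IsPSTWInstance (G : SimpleGraph V) (Ws : Set (Set V)) (k : ℕ) : Prop :=
  Ws.Finite ∧ Ws.Nonempty ∧ 1 ≤ k ∧ ∀ W ∈ Ws, G.IsClique W ∧ W.ncard ≤ k + 1

/-- `(X, (T, bag))` is a solution of the instance `(G, Ws, k)`. -/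
def IsSolutionTD (G : SimpleGraph V) (Ws : Set (Set V)) (k : ℕ)
    (X : Set V) (T : SimpleGraph ι) (bag : ι → Set V) : Prop :=
  IsTorsoTreeDecomp G X T bag ∧ ⋃₀ Ws ⊆ X ∧ ∀ t, (bag t).ncard ≤ k + 1

/-- The instance `(G, Ws, k)` is a yes-instance. -/
def IsYesInstance (G : SimpleGraph V) (Ws : Set (Set V)) (k : ℕ) : Prop :=
  ∃ (κ : Type) (T : SimpleGraph κ) (bag : κ → Set V) (X : Set V),
    IsSolutionTD G Ws k X T bag

/-- `W̄_I(W)`: the union of the terminal cliques other than `W`. -/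
def otherUnion (Ws : Set (Set V)) (W : Set V) : Set V := ⋃₀ (Ws \ {W})

/-- `flp_I(W) = flp_G(W, W̄_I(W))`. -/
noncomputable def flpInst (G : SimpleGraph V) (Ws : Set (Set V)) (W : Set V) : ℕ :=
  flpG G W (otherUnion Ws W)

/-- `(A, S, B)` is a safe separation of the instance `(G, Ws, k)`. -/
def IsSafeSeparation (G : SimpleGraph V) (Ws : Set (Set V)) (A S B : Set V) : Prop :=
  IsSeparation G A S B ∧ A.Nonempty ∧ B.Nonempty ∧
    ∃ Wa ∈ Ws, ∃ Wb ∈ Ws,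
      LinkedInto G S ((A ∪ S) ∩ Wa) ∧ LinkedInto G S ((B ∪ S) ∩ Wb)

/-- `Ws ◁ (A, S)`: remove the terminal cliques not meeting `A`, then insert `S` if no superset
of `S` is present. -/
def restrictCliques (Ws : Set (Set V)) (A S : Set V) : Set (Set V) :=
  {W ∈ Ws | (W ∩ A).Nonempty} ∪
    {W | W = S ∧ ¬ ∃ W' ∈ Ws, (W' ∩ A).Nonempty ∧ S ⊆ W'}

/-- `G ◁ (A, S) = G[A ∪ S] ⊗ S`, as a graph on the vertex set `A ∪ S`. -/
def restrictGraph (G : SimpleGraph V) (A S : Set V) : SimpleGraph ↥(A ∪ S) :=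
  addCliqueG (G.induce (A ∪ S)) (Subtype.val ⁻¹' S)

/-- The terminal cliques of `I ◁ (A, S)`, viewed as subsets of the vertex set `A ∪ S`. -/
def restrictSets (Ws : Set (Set V)) (A S : Set V) : Set (Set ↥(A ∪ S)) :=
  (fun W => Subtype.val ⁻¹' W) '' restrictCliques Ws A S

/-- The terminal cliques of `I × (Wi, Wj)`. -/
def mergeCliques (Ws : Set (Set V)) (Wi Wj : Set V) : Set (Set V) :=
  insert (Wi ∪ Wj) (Ws \ {Wi, Wj})

/-- The terminal cliques of `I + (W, ·)`, replacing `W` by `W'`. -/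
def replaceClique (Ws : Set (Set V)) (W W' : Set V) : Set (Set V) :=
  insert W' (Ws \ {W})

/-- The instance `(G, Ws, k)` is maximally merged. -/
def MaximallyMerged (G : SimpleGraph V) (Ws : Set (Set V)) (k : ℕ) : Prop :=
  ∀ Wi ∈ Ws, ∀ Wj ∈ Ws, Wi ≠ Wj → (Wi ∪ Wj).ncard ≤ k + 1 →
    ¬ IsYesInstance (addCliqueG G (Wi ∪ Wj)) (mergeCliques Ws Wi Wj) k

/-- `Wi` is a potential forget-clique of the instance `(G, Ws, k)`. -/
def IsPotentialForgetClique (G : SimpleGraph V) (Ws : Set (Set V)) (k : ℕ)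
    (Wi : Set V) : Prop :=
  ∃ (κ : Type) (T : SimpleGraph κ) (bag : κ → Set V) (X : Set V),
    IsSolutionTD G Ws k X T bag ∧
    ∃ l p : κ, T.Adj l p ∧ (∀ q, T.Adj l q → q = p) ∧
      Wi ⊆ bag l ∧ ∃ w ∈ Wi \ otherUnion Ws Wi, bag p = bag l \ {w}

/-- The disjoint union of two trees together with one extra edge between `a` and `b`. -/
def glueTrees {ι₁ ι₂ : Type*} (T₁ : SimpleGraph ι₁) (T₂ : SimpleGraph ι₂)
    (a : ι₁) (b : ι₂) : SimpleGraph (ι₁ ⊕ ι₂) where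
  Adj x y :=
    (∃ u v, T₁.Adj u v ∧ x = Sum.inl u ∧ y = Sum.inl v) ∨
    (∃ u v, T₂.Adj u v ∧ x = Sum.inr u ∧ y = Sum.inr v) ∨
    (x = Sum.inl a ∧ y = Sum.inr b) ∨
    (x = Sum.inr b ∧ y = Sum.inl a)
  symm := ⟨by
    rintro x y (⟨u, v, h, rfl, rfl⟩ | ⟨u, v, h, rfl, rfl⟩ | ⟨rfl, rfl⟩ | ⟨rfl, rfl⟩)
    · exact Or.inl ⟨v, u, h.symm, rfl, rfl⟩
    · exact Or.inr (Or.inl ⟨v, u, h.symm, rfl, rfl⟩)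
    · exact Or.inr (Or.inr (Or.inr ⟨rfl, rfl⟩))
    · exact Or.inr (Or.inr (Or.inl ⟨rfl, rfl⟩))⟩
  loopless := ⟨by
    rintro x (⟨u, v, h, rfl, he⟩ | ⟨u, v, h, rfl, he⟩ | ⟨rfl, he⟩ | ⟨rfl, he⟩)
    · exact h.ne (Sum.inl.inj he)
    · exact h.ne (Sum.inr.inj he)
    · exact Sum.inl_ne_inr he
    · exact Sum.inr_ne_inl he⟩

/-- The sum of the weights `d` over the set `S`. -/
noncomputable def setSum [Finite V] (d : V → ℕ) (S : Set V) : ℕ :=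
  ∑ v ∈ S.toFinite.toFinset, d v

/-! Suppose some `(S', T)`-separator `Z`, where `T = S ∩ (R_G(A, S') ∪ S')`, is smaller than
`S'`, and let `R = R_G(A, S)`. Every vertex through which one leaves `R` lies in `T`, so `Z \ R`
still separates `S'` from `T`; as `S'` and `T` both separate `A` from `B`, so does `Z \ R`. Its
reach contains `R`, hence an important separator dominating `Z \ R` dominates `S` and is smaller
than `S'`. -/

section Separators

variable {G : SimpleGraph V}

lemma disjoint_reachG (X S : Set V) : Disjoint (reachG G X S) S :=
  Set.disjoint_left.2 fun _ ⟨_, _, _, p, hp⟩ => hp _ p.end_mem_support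

lemma mem_reachG_self {X S : Set V} {x : V} (hx : x ∈ X) (hxS : x ∉ S) : x ∈ reachG G X S :=
  ⟨x, hx, hxS, .nil, by simpa using hxS⟩

lemma reachG_anti {X S₁ S₂ : Set V} (h : S₁ ⊆ S₂) : reachG G X S₂ ⊆ reachG G X S₁ :=
  fun _ ⟨x, hx, hxS, p, hp⟩ => ⟨x, hx, fun hc => hxS (h hc), p, fun w hw hc => hp w hw (h hc)⟩

lemma mem_reachG_of_adj {X S : Set V} {u v : V} (hu : u ∈ reachG G X S) (huv : G.Adj u v)
    (hv : v ∉ S) : v ∈ reachG G X S := by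
  obtain ⟨x, hx, hxS, p, hp⟩ := hu
  refine ⟨x, hx, hxS, p.concat huv, fun w hw => ?_⟩
  rw [Walk.support_concat, List.mem_append, List.mem_singleton] at hw
  rcases hw with hw | rfl
  exacts [hp w hw, hv]

lemma mem_reachG_of_mem_support [DecidableEq V] {X S : Set V} {x v w : V} (hx : x ∈ X)
    (hxS : x ∉ S) (p : G.Walk x v) (hp : ∀ u ∈ p.support, u ∉ S) (hw : w ∈ p.support) :
    w ∈ reachG G X S :=
  ⟨x, hx, hxS, p.takeUntil w hw, fun u hu => hp u (p.support_takeUntil_subset_support hw hu)⟩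

lemma reachG_subset_reachG_of_disjoint {X S Z : Set V} (hZ : Disjoint Z (reachG G X S)) :
    reachG G X S ⊆ reachG G X Z := by
  classical
  rintro v ⟨x, hx, hxS, p, hp⟩
  have hreach : ∀ w ∈ p.support, w ∈ reachG G X S :=
    fun _ => mem_reachG_of_mem_support hx hxS p hp
  exact ⟨x, hx, Set.disjoint_left.1 hZ.symm (hreach x p.start_mem_support), p,
    fun w hw => Set.disjoint_left.1 hZ.symm (hreach w hw)⟩

lemma SimpleGraph.Walk.exists_walk_to_mem_avoiding {R Y : Set V}
    (hR : ∀ ⦃u v⦄, u ∈ R → v ∉ R → G.Adj u v → v ∈ Y) {x y : V} (p : G.Walk x y)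
    (hx : x ∉ R) (hy : y ∈ R ∪ Y) :
    ∃ v ∈ Y, ∃ q : G.Walk x v, q.support ⊆ p.support ∧ ∀ w ∈ q.support, w ∉ R := by
  induction p with
  | nil => exact ⟨_, hy.resolve_left hx, .nil, fun _ h => h, by simpa using hx⟩
  | @cons x u y hxu p ih =>
    by_cases hu : u ∈ R
    · exact ⟨x, hR hu hx hxu.symm, .nil, by simp, by simpa using hx⟩
    · obtain ⟨v, hv, q, hqp, hqR⟩ := ih hu hy
      refine ⟨v, hv, .cons hxu q, ?_, ?_⟩
      · simpa only [Walk.support_cons] using List.cons_subset_cons x hqp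
      · simpa only [Walk.support_cons, List.mem_cons, forall_eq_or_imp] using ⟨hx, hqR⟩

lemma IsSep.diff {X Y Z R : Set V} (hZ : IsSep G X Y Z) (hXR : Disjoint X R)
    (hR : ∀ ⦃u v⦄, u ∈ R → v ∉ R → G.Adj u v → v ∈ Y) : IsSep G X Y (Z \ R) := by
  intro x y hx hy p
  obtain ⟨v, hv, q, hqp, hqR⟩ :=
    p.exists_walk_to_mem_avoiding hR (Set.disjoint_left.1 hXR hx) (Or.inr hy)
  obtain ⟨z, hz, hzq⟩ := hZ hx hv q
  exact ⟨z, ⟨hz, hqR z hzq⟩, hqp hzq⟩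

lemma IsSep.of_isSep_between {A B X Y Z : Set V} (hX : IsSep G A B X) (hY : IsSep G A B Y)
    (hZ : IsSep G X Y Z) : IsSep G A B Z := by
  classical
  intro a b ha hb p
  obtain ⟨x, hx, hxp⟩ := hX ha hb p
  obtain ⟨y, hy, hyp⟩ := hY ha hb p
  obtain ⟨z, hz, hzq⟩ := hZ hx hy ((p.takeUntil x hxp).reverse.append (p.takeUntil y hyp))
  refine ⟨z, hz, ?_⟩
  rw [Walk.mem_support_append_iff, Walk.support_reverse, List.mem_reverse] at hzq
  exact hzq.elim (fun h => p.support_takeUntil_subset_support hxp h)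
    (fun h => p.support_takeUntil_subset_support hyp h)

lemma mem_inter_reachG_union_of_adj {A S S' : Set V} (hRR : reachG G A S ⊆ reachG G A S')
    {u v : V} (hu : u ∈ reachG G A S) (hv : v ∉ reachG G A S) (huv : G.Adj u v) :
    v ∈ S ∩ (reachG G A S' ∪ S') := by
  refine ⟨by_contra fun hvS => hv (mem_reachG_of_adj hu huv hvS), ?_⟩
  by_cases hvS' : v ∈ S'
  exacts [Or.inr hvS', Or.inl (mem_reachG_of_adj (hRR hu) huv hvS')]

lemma isSep_inter_reachG_union {A B S S' : Set V} (hS : IsSep G A B S)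
    (hRR : reachG G A S ⊆ reachG G A S') : IsSep G A B (S ∩ (reachG G A S' ∪ S')) := by
  intro a b ha hb p
  by_cases haS : a ∈ S
  · refine ⟨a, ⟨haS, ?_⟩, p.start_mem_support⟩
    by_cases haS' : a ∈ S'
    exacts [Or.inr haS', Or.inl (mem_reachG_self ha haS')]
  · have hbR : b ∉ reachG G A S := fun hb' => by
      obtain ⟨a', ha', ha'S, q, hq⟩ := hb'
      obtain ⟨s, hs, hsq⟩ := hS ha' hb q
      exact hq s hsq hs
    obtain ⟨v, hv, q, hqp, -⟩ := p.reverse.exists_walk_to_mem_avoiding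
      (fun _ _ => mem_inter_reachG_union_of_adj hRR) hbR (Or.inl (mem_reachG_self ha haS))
    exact ⟨v, hv, by simpa using hqp q.end_mem_support⟩

lemma exists_isMinimalSep_subset [Finite V] {X Y Z : Set V} (hZ : IsSep G X Y Z) :
    ∃ Z₀ ⊆ Z, IsMinimalSep G X Y Z₀ := by
  obtain ⟨Z₀, hZ₀Z, hZ₀sep, hZ₀min⟩ := exists_minimal_le_of_wellFoundedLT _ Z hZ
  exact ⟨Z₀, hZ₀Z, hZ₀sep, fun W hW hWsep => hW.not_subset (hZ₀min hWsep hW.subset)⟩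

/-- Among the separators no larger than `Y` whose reach contains that of `Y`, one with the
largest reach, shrunk to a minimal separator, is important. -/
lemma exists_dominatesSep [Finite V] {A B Y : Set V} (hY : IsSep G A B Y) :
    ∃ Y', DominatesSep G A B Y Y' := by
  set F := {Y' | IsSep G A B Y' ∧ Y'.ncard ≤ Y.ncard ∧ reachG G A Y ⊆ reachG G A Y'}
  obtain ⟨Y₀, ⟨hY₀sep, hY₀card, hY₀reach⟩, hY₀max⟩ :=
    F.exists_max_image (fun Y' => (reachG G A Y').ncard) F.toFinite ⟨Y, hY, le_rfl, le_rfl⟩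
  obtain ⟨Y₁, hY₁Y₀, hY₁min⟩ := exists_isMinimalSep_subset hY₀sep
  have hY₁card : Y₁.ncard ≤ Y.ncard := (Set.ncard_le_ncard hY₁Y₀).trans hY₀card
  have hY₁reach : reachG G A Y ⊆ reachG G A Y₁ := hY₀reach.trans (reachG_anti hY₁Y₀)
  refine ⟨Y₁, ⟨hY₁min, ?_⟩, hY₁card, hY₁reach⟩
  rintro ⟨Y₂, hY₂sep, hY₂card, hY₂reach⟩
  have h₂₀ := hY₀max Y₂ ⟨hY₂sep, hY₂card.trans hY₁card, hY₁reach.trans hY₂reach.subset⟩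
  have h₀₁ := Set.ncard_le_ncard (reachG_anti (G := G) (X := A) hY₁Y₀)
  have h₁₂ := Set.ncard_lt_ncard hY₂reach
  omega

lemma linkedInto_iff {X Y : Set V} :
    LinkedInto G X Y ↔ ∀ Z, IsSep G X Y Z → X.ncard ≤ Z.ncard := by
  have hX : X.ncard ∈ Set.ncard '' {Z | IsSep G X Y Z} :=
    ⟨X, fun x _ hx _ p => ⟨x, hx, p.start_mem_support⟩, rfl⟩
  refine ⟨fun h Z hZ => h ▸ Nat.sInf_le ⟨Z, hZ, rfl⟩, fun h => ?_⟩
  refine le_antisymm (Nat.sInf_le hX) (le_csInf ⟨_, hX⟩ ?_)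
  rintro _ ⟨Z, hZ, rfl⟩
  exact h Z hZ

end Separators

/-- Let `S` be an `(A, B)`-separator and `S'` a smallest important `(A, B)`-separator
dominating `S`. Then `S'` is linked into `S ∩ (R_G(A, S') ∪ S')`. -/
theorem smallest_dominating_important_separator_linked {V : Type} [Fintype V]
    (G : SimpleGraph V) (A B S S' : Set V)
    (hS : IsSep G A B S)
    (hdom : DominatesSep G A B S S')
    (hmin : ∀ S'' : Set V, DominatesSep G A B S S'' → S'.ncard ≤ S''.ncard) :
    LinkedInto G S' (S ∩ (reachG G A S' ∪ S')) := by
  obtain ⟨hS'imp, hcard, hRR⟩ := hdom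
  refine linkedInto_iff.2 fun Z hZ => ?_
  by_contra! hlt
  set R := reachG G A S
  have hZR : IsSep G A B (Z \ R) :=
    hS'imp.1.1.of_isSep_between (isSep_inter_reachG_union hS hRR)
      (hZ.diff ((disjoint_reachG A S').symm.mono_right hRR)
        fun _ _ => mem_inter_reachG_union_of_adj hRR)
  obtain ⟨Y, hYimp, hYcard, hYreach⟩ := exists_dominatesSep hZR
  have hYZ : Y.ncard ≤ Z.ncard := hYcard.trans (Set.ncard_le_ncard Set.sdiff_subset)
  have hY : DominatesSep G A B S Y :=
    ⟨hYimp, by omega, (reachG_subset_reachG_of_disjoint Set.disjoint_sdiff_left).trans hYreach⟩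
  have := hmin Y hY
  omega
end

section
/- Let I = (G, {W_1, …, W_t}, k) be an instance of Partitioned Subset Treewidth and let (A, S, B) be a separation of G with |S| ≤ k+1. If (X_A, (T_A, bag_A)) is a solution of I ◁ (A,S) and (X_B, (T_B, bag_B)) is a solution of I ◁ (B,S), then (X_A ∪ X_B, (T_A, bag_A) ∪_S (T_B, bag_B)) is a solution of I. -/
open SimpleGraph

variable {V ι : Type*}

/-!
Joining the two trees by one edge between bags that contain `S` gives a tree, and the bags
containing a vertex still form a subtree: a vertex of both `X_A` and `X_B` lies in
`(A ∪ S) ∩ (B ∪ S) = S`, hence in both ends of the new edge. Coverage and width are inherited.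

The substance is the torso condition. A torso edge of `X_A ∪ X_B` never joins `A \ S` to
`B \ S`, since a walk between them passes through `S ⊆ X_A ∪ X_B`. A torso edge `uv` inside
`A ∪ S` is a torso edge of `G ◁ (A, S)`: if `u, v ∈ S` they are adjacent in the clique on `S`;
if `u ∉ S`, the witnessing walk meets `S` only in `v`, so until it first reaches `v` it cannot
cross into `B`, and that initial segment is a walk of `G[A ∪ S]`.
-/

namespace SimpleGraph

variable {V V' W : Type*} {G : SimpleGraph V} {G' : SimpleGraph V'} {H : SimpleGraph W}

theorem Reachable.of_adj_imp_eq_or_adj {f : V → V'}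
    (hf : ∀ ⦃x y⦄, G.Adj x y → f x = f y ∨ G'.Adj (f x) (f y)) {x y : V}
    (h : G.Reachable x y) : G'.Reachable (f x) (f y) := by
  obtain ⟨p⟩ := h
  induction p with
  | nil => rfl
  | cons hadj _ ih => exact (hf hadj).elim (· ▸ ih) (·.reachable.trans ih)

theorem IsBridge.sum_inl {u v : V} (h : G.IsBridge s(u, v)) :
    (G ⊕g H).IsBridge s(.inl u, .inl v) := fun hr =>
  h <| hr.of_adj_imp_eq_or_adj (f := Sum.elim id fun _ => u) <| by
    rintro (x | x) (y | y) hxy <;> simp_all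

theorem IsBridge.sum_inr {u v : W} (h : H.IsBridge s(u, v)) :
    (G ⊕g H).IsBridge s(.inr u, .inr v) := fun hr =>
  h <| hr.of_adj_imp_eq_or_adj (f := Sum.elim (fun _ => u) id) <| by
    rintro (x | x) (y | y) hxy <;> simp_all

theorem IsAcyclic.sum (hG : G.IsAcyclic) (hH : H.IsAcyclic) : (G ⊕g H).IsAcyclic := by
  rw [isAcyclic_iff_forall_adj_isBridge] at *
  rintro (u | u) (v | v) huv
  · exact (hG (sum_adj_inl.mp huv)).sum_inl
  · exact absurd huv (not_adj_sum_inl_inr u v)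
  · exact absurd huv.symm (not_adj_sum_inl_inr v u)
  · exact (hH (sum_adj_inr.mp huv)).sum_inr

theorem Connected.induce_image (f : G →g G') {s : Set V} (h : (G.induce s).Connected) :
    (G'.induce (f '' s)).Connected :=
  h.map ⟨fun x => ⟨f x.1, Set.mem_image_of_mem f x.2⟩, f.map_rel⟩ <| by
    rintro ⟨_, x, hx, rfl⟩
    exact ⟨⟨x, hx⟩, rfl⟩

end SimpleGraph

section glueTrees

variable {ι₁ ι₂ : Type*} {T₁ : SimpleGraph ι₁} {T₂ : SimpleGraph ι₂} {a : ι₁} {b : ι₂}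

theorem glueTrees_eq_sum_sup_edge :
    glueTrees T₁ T₂ a b = (T₁ ⊕g T₂) ⊔ edge (Sum.inl a) (Sum.inr b) := by
  ext (x | x) (y | y) <;> simp [glueTrees, edge_adj]

theorem SimpleGraph.IsTree.glueTrees (h₁ : T₁.IsTree) (h₂ : T₂.IsTree) :
    (glueTrees T₁ T₂ a b).IsTree := by
  rw [glueTrees_eq_sum_sup_edge]
  exact ⟨h₁.1.sum_sup_edge h₂.1,
    (h₁.2.sum h₂.2).sup_edge_of_not_reachable (not_reachable_sum_inl_inr a b)⟩

theorem connected_induce_glueTrees_inl {s : Set ι₁} (h : (T₁.induce s).Connected) :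
    ((glueTrees T₁ T₂ a b).induce (Sum.inl '' s)).Connected := by
  rw [glueTrees_eq_sum_sup_edge]
  exact h.induce_image ((Hom.ofLE le_sup_left).comp Embedding.sumInl.toHom)

theorem connected_induce_glueTrees_inr {s : Set ι₂} (h : (T₂.induce s).Connected) :
    ((glueTrees T₁ T₂ a b).induce (Sum.inr '' s)).Connected := by
  rw [glueTrees_eq_sum_sup_edge]
  exact h.induce_image ((Hom.ofLE le_sup_left).comp Embedding.sumInr.toHom)

theorem connected_induce_glueTrees {s₁ : Set ι₁} {s₂ : Set ι₂}
    (h₁ : (T₁.induce s₁).Connected) (h₂ : (T₂.induce s₂).Connected) (ha : a ∈ s₁)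
    (hb : b ∈ s₂) :
    ((glueTrees T₁ T₂ a b).induce (Sum.inl '' s₁ ∪ Sum.inr '' s₂)).Connected :=
  connected_induce_union (connected_induce_glueTrees_inl h₁).preconnected
    (connected_induce_glueTrees_inr h₂).preconnected (Set.mem_image_of_mem _ ha)
    (Set.mem_image_of_mem _ hb) (Or.inr (Or.inr (Or.inl ⟨rfl, rfl⟩)))

end glueTrees

namespace IsSeparation

variable {V : Type*} {G : SimpleGraph V} {A S B : Set V}

theorem symm (h : IsSeparation G A S B) : IsSeparation G B S A where
  disjoint_AS := h.disjoint_SB.symm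
  disjoint_AB := h.disjoint_AB.symm
  disjoint_SB := h.disjoint_AS.symm
  union_eq := by rw [← h.union_eq]; ext; simp only [Set.mem_union]; tauto
  no_adj := fun _ _ ha hb hadj => h.no_adj hb ha hadj.symm

theorem mem_union_or_mem (h : IsSeparation G A S B) (x : V) : x ∈ A ∪ S ∨ x ∈ B :=
  show x ∈ A ∪ S ∪ B from h.union_eq ▸ Set.mem_univ x

theorem mem_of_mem_union_of_mem_union (h : IsSeparation G A S B) {x : V} (hA : x ∈ A ∪ S)
    (hB : x ∈ B ∪ S) : x ∈ S :=
  hA.resolve_left fun hxA => hB.elim (Set.disjoint_left.mp h.disjoint_AB hxA)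
    (Set.disjoint_left.mp h.disjoint_AS hxA)

theorem notMem_of_adj (h : IsSeparation G A S B) {x y : V} (hx : x ∈ A) (hxy : G.Adj x y) :
    y ∉ B :=
  fun hy => h.no_adj hx hy hxy

theorem exists_mem_support_of_walk (h : IsSeparation G A S B) {x y : V} (p : G.Walk x y)
    (hx : x ∈ A) (hy : y ∈ B) : ∃ s ∈ S, s ∈ p.support := by
  obtain ⟨d, hd, hdA, hdnA⟩ :=
    p.exists_boundary_dart A hx (Set.disjoint_left.mp h.disjoint_AB · hy)
  refine ⟨d.snd, ?_, p.dart_snd_mem_support_of_mem_darts hd⟩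
  exact ((h.mem_union_or_mem _).resolve_right (h.notMem_of_adj hdA d.adj)).resolve_left hdnA

theorem not_torsoGraph_adj (h : IsSeparation G A S B) {X : Set V} (hSX : S ⊆ X) {u v : V}
    (hu : u ∈ A) (hv : v ∈ B) : ¬ (torsoGraph G X).Adj u v := by
  rintro ⟨-, -, -, p, hp⟩
  obtain ⟨s, hs, hsp⟩ := h.exists_mem_support_of_walk p hu hv
  rcases hp s hsp with rfl | rfl | hsX
  · exact Set.disjoint_left.mp h.disjoint_AS hu hs
  · exact Set.disjoint_left.mp h.disjoint_SB hs hv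
  · exact hsX (hSX hs)

theorem torsoGraph_adj_mem_and_mem (h : IsSeparation G A S B) {X₁ X₂ : Set V}
    (h₁ : X₁ ⊆ A ∪ S) (h₂ : X₂ ⊆ B ∪ S) (hS₁ : S ⊆ X₁) (hS₂ : S ⊆ X₂) {u v : V}
    (huv : (torsoGraph G (X₁ ∪ X₂)).Adj u v) : (u ∈ X₁ ∧ v ∈ X₁) ∨ (u ∈ X₂ ∧ v ∈ X₂) := by
  have no_cross : ∀ {x y}, (torsoGraph G (X₁ ∪ X₂)).Adj x y →
      x ∈ X₁ → x ∉ X₂ → y ∈ X₂ → y ∉ X₁ → False := fun hxy hx₁ hx₂ hy₂ hy₁ =>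
    h.not_torsoGraph_adj (hS₁.trans Set.subset_union_left)
      ((h₁ hx₁).resolve_right (hx₂ <| hS₂ ·)) ((h₂ hy₂).resolve_right (hy₁ <| hS₁ ·)) hxy
  have hu : u ∈ X₁ ∨ u ∈ X₂ := huv.2.1
  have hv : v ∈ X₁ ∨ v ∈ X₂ := huv.2.2.1
  have := no_cross huv
  have := no_cross huv.symm
  tauto

theorem exists_walk_induce_of_walk (h : IsSeparation G A S B) {x y : V} (p : G.Walk x y)
    (hx : x ∈ A) (hy : y ∈ A ∪ S) (hp : ∀ w ∈ p.support, w = y ∨ w ∉ S) :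
    ∃ q : (G.induce (A ∪ S)).Walk ⟨x, Or.inl hx⟩ ⟨y, hy⟩,
      ∀ w ∈ q.support, (w : V) ∈ p.support := by
  induction p with
  | nil => exact ⟨.nil, by simp⟩
  | @cons x z y hxz p ih =>
    by_cases hzS : z ∈ S
    · obtain rfl : z = y := (hp z (by simp)).resolve_right (not_not.mpr hzS)
      refine ⟨Walk.cons (v := ⟨z, hy⟩) (induce_adj.2 hxz) .nil, ?_⟩
      simp
    · have hzA : z ∈ A :=
        ((h.mem_union_or_mem z).resolve_right (h.notMem_of_adj hx hxz)).resolve_right hzS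
      obtain ⟨q, hq⟩ := ih hzA hy fun w hw => hp w (by simp [hw])
      refine ⟨.cons (v := ⟨z, Or.inl hzA⟩) (induce_adj.2 hxz) q, ?_⟩
      simp only [Walk.support_cons, List.mem_cons]
      rintro w (rfl | hw)
      · simp
      · simp [hq w hw]

theorem torsoGraph_restrictGraph_adj (h : IsSeparation G A S B) {X : Set V}
    {XA : Set ↥(A ∪ S)} (hXA : Subtype.val '' XA ⊆ X) (hSX : S ⊆ X) {u v : ↥(A ∪ S)}
    (hu : u ∈ XA) (hv : v ∈ XA) (huv : (torsoGraph G X).Adj u v) :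
    (torsoGraph (restrictGraph G A S) XA).Adj u v := by
  wlog huS : (u : V) ∉ S generalizing u v
  · by_cases hvS : (v : V) ∈ S
    · have hne : u ≠ v := Subtype.coe_ne_coe.mp huv.ne
      have hadj : (restrictGraph G A S).Adj u v := Or.inr ⟨hne, not_not.mp huS, hvS⟩
      refine ⟨hne, hu, hv, hadj.toWalk, ?_⟩
      simp
    · exact (this hv hu huv.symm hvS).symm
  obtain ⟨hne, -, -, p, hp⟩ := huv
  obtain ⟨q, hq⟩ := h.exists_walk_induce_of_walk p (u.2.resolve_right huS) v.2 fun w hw =>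
    (hp w hw).elim (fun hwu => Or.inr (hwu ▸ huS)) (Or.imp_right (mt (hSX ·)))
  have hle : G.induce (A ∪ S) ≤ restrictGraph G A S := le_sup_left
  refine ⟨Subtype.coe_ne_coe.mp hne, hu, hv, q.mapLe hle, fun w hw => ?_⟩
  rw [Walk.support_mapLe_eq_support] at hw
  exact (hp w (hq w hw)).imp Subtype.ext
    (Or.imp Subtype.ext fun hwX hwXA => hwX (hXA ⟨w, hwXA, rfl⟩))

end IsSeparation

theorem Set.subset_image_val_of_preimage_val_subset {V : Type*} {s t : Set V} {u : Set s}
    (hts : t ⊆ s) (h : Subtype.val ⁻¹' t ⊆ u) : t ⊆ Subtype.val '' u :=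
  fun x hx => ⟨⟨x, hts hx⟩, h hx, rfl⟩

section restrictSets

variable {V : Type*} {Ws : Set (Set V)} {A S : Set V}

theorem mem_image_sUnion_restrictSets {W : Set V} {w : V} (hW : W ∈ Ws) (hw : w ∈ W)
    (hwA : w ∈ A) : w ∈ Subtype.val '' ⋃₀ restrictSets Ws A S :=
  ⟨⟨w, Or.inl hwA⟩, ⟨_, ⟨W, Or.inl ⟨hW, w, hw, hwA⟩, rfl⟩, hw⟩, rfl⟩

theorem preimage_val_subset_sUnion_restrictSets :
    Subtype.val ⁻¹' S ⊆ ⋃₀ restrictSets Ws A S := by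
  intro x hx
  by_cases hsup : ∃ W ∈ Ws, (W ∩ A).Nonempty ∧ S ⊆ W
  · obtain ⟨W, hW, hWA, hSW⟩ := hsup
    exact ⟨_, ⟨W, Or.inl ⟨hW, hWA⟩, rfl⟩, hSW hx⟩
  · exact ⟨_, ⟨S, Or.inr ⟨rfl, hsup⟩, rfl⟩, hx⟩

theorem IsSeparation.sUnion_subset_image_sUnion_restrictSets {G : SimpleGraph V} {B : Set V}
    (h : IsSeparation G A S B) :
    ⋃₀ Ws ⊆ Subtype.val '' ⋃₀ restrictSets Ws A S ∪ Subtype.val '' ⋃₀ restrictSets Ws B S := by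
  rintro w ⟨W, hW, hw⟩
  rcases h.mem_union_or_mem w with (hwA | hwS) | hwB
  · exact Or.inl (mem_image_sUnion_restrictSets hW hw hwA)
  · exact Or.inl (Set.subset_image_val_of_preimage_val_subset Set.subset_union_right
      preimage_val_subset_sUnion_restrictSets hwS)
  · exact Or.inr (mem_image_sUnion_restrictSets hW hw hwB)

end restrictSets

namespace IsTorsoTreeDecomp

section imageVal

variable {V ι : Type*} {P : Set V} {G' : SimpleGraph P} {X : Set P} {T : SimpleGraph ι}
  {bag : ι → Set P}

theorem connected_induce_setOf_mem_image_val (h : IsTorsoTreeDecomp G' X T bag) {v : V}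
    (hv : v ∈ Subtype.val '' X) : (T.induce {t | v ∈ Subtype.val '' bag t}).Connected := by
  obtain ⟨x, hx, rfl⟩ := hv
  have hbags : {t | ↑x ∈ Subtype.val '' bag t} = {t | x ∈ bag t} := by
    simp only [Subtype.val_injective.mem_set_image]
  exact hbags ▸ h.conn x hx

theorem setOf_mem_image_val_eq_empty (h : IsTorsoTreeDecomp G' X T bag) {v : V}
    (hv : v ∉ Subtype.val '' X) : {t | v ∈ Subtype.val '' bag t} = ∅ :=
  Set.eq_empty_of_forall_notMem fun t ht => hv (Set.image_mono (h.bag_subset t) ht)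

end imageVal

theorem glueTrees {V ι₁ ι₂ : Type*} {G : SimpleGraph V} {P Q : Set V}
    {G₁ : SimpleGraph P} {G₂ : SimpleGraph Q} {X₁ : Set P} {X₂ : Set Q}
    {T₁ : SimpleGraph ι₁} {T₂ : SimpleGraph ι₂} {bag₁ : ι₁ → Set P} {bag₂ : ι₂ → Set Q}
    {a : ι₁} {b : ι₂} (h₁ : IsTorsoTreeDecomp G₁ X₁ T₁ bag₁)
    (h₂ : IsTorsoTreeDecomp G₂ X₂ T₂ bag₂)
    (ha : Subtype.val '' X₁ ∩ Subtype.val '' X₂ ⊆ Subtype.val '' bag₁ a)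
    (hb : Subtype.val '' X₁ ∩ Subtype.val '' X₂ ⊆ Subtype.val '' bag₂ b)
    (hedge : ∀ ⦃u v : V⦄, (torsoGraph G (Subtype.val '' X₁ ∪ Subtype.val '' X₂)).Adj u v →
      (∃ t, u ∈ Subtype.val '' bag₁ t ∧ v ∈ Subtype.val '' bag₁ t) ∨
        (∃ t, u ∈ Subtype.val '' bag₂ t ∧ v ∈ Subtype.val '' bag₂ t)) :
    IsTorsoTreeDecomp G (Subtype.val '' X₁ ∪ Subtype.val '' X₂) (glueTrees T₁ T₂ a b)
      (Sum.elim (fun t => Subtype.val '' bag₁ t) (fun t => Subtype.val '' bag₂ t)) := by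
  refine ⟨h₁.tree.glueTrees h₂.tree, ?_, ?_, ?_, fun v hv => ?_⟩
  · rintro (t | t)
    · exact (Set.image_mono (h₁.bag_subset t)).trans Set.subset_union_left
    · exact (Set.image_mono (h₂.bag_subset t)).trans Set.subset_union_right
  · rintro _ (⟨x, hx, rfl⟩ | ⟨x, hx, rfl⟩)
    · obtain ⟨t, ht⟩ := h₁.mem_bag x hx
      exact ⟨.inl t, x, ht, rfl⟩
    · obtain ⟨t, ht⟩ := h₂.mem_bag x hx
      exact ⟨.inr t, x, ht, rfl⟩
  · intro u v huv
    rcases hedge huv with ⟨t, ht⟩ | ⟨t, ht⟩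
    exacts [⟨.inl t, ht⟩, ⟨.inr t, ht⟩]
  · have hbags : {t | v ∈ Sum.elim (fun t => Subtype.val '' bag₁ t)
          (fun t => Subtype.val '' bag₂ t) t} =
        Sum.inl '' {t | v ∈ Subtype.val '' bag₁ t} ∪
          Sum.inr '' {t | v ∈ Subtype.val '' bag₂ t} := by
      ext (t | t) <;> simp
    rw [hbags]
    by_cases hv₁ : v ∈ Subtype.val '' X₁ <;> by_cases hv₂ : v ∈ Subtype.val '' X₂
    · exact connected_induce_glueTrees (h₁.connected_induce_setOf_mem_image_val hv₁)
        (h₂.connected_induce_setOf_mem_image_val hv₂) (ha ⟨hv₁, hv₂⟩) (hb ⟨hv₁, hv₂⟩)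
    · rw [h₂.setOf_mem_image_val_eq_empty hv₂, Set.image_empty, Set.union_empty]
      exact connected_induce_glueTrees_inl (h₁.connected_induce_setOf_mem_image_val hv₁)
    · rw [h₁.setOf_mem_image_val_eq_empty hv₁, Set.image_empty, Set.empty_union]
      exact connected_induce_glueTrees_inr (h₂.connected_induce_setOf_mem_image_val hv₂)
    · exact (hv.elim hv₁ hv₂).elim

end IsTorsoTreeDecomp

theorem IsSeparation.torsoGraph_adj_mem_bags {V ι₁ ι₂ : Type*} {G : SimpleGraph V}
    {A S B : Set V} (h : IsSeparation G A S B) {XA : Set ↥(A ∪ S)} {XB : Set ↥(B ∪ S)}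
    {TA : SimpleGraph ι₁} {TB : SimpleGraph ι₂} {bagA : ι₁ → Set ↥(A ∪ S)}
    {bagB : ι₂ → Set ↥(B ∪ S)} (hA : IsTorsoTreeDecomp (restrictGraph G A S) XA TA bagA)
    (hB : IsTorsoTreeDecomp (restrictGraph G B S) XB TB bagB) (hSA : S ⊆ Subtype.val '' XA)
    (hSB : S ⊆ Subtype.val '' XB) ⦃u v : V⦄
    (huv : (torsoGraph G (Subtype.val '' XA ∪ Subtype.val '' XB)).Adj u v) :
    (∃ t, u ∈ Subtype.val '' bagA t ∧ v ∈ Subtype.val '' bagA t) ∨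
      (∃ t, u ∈ Subtype.val '' bagB t ∧ v ∈ Subtype.val '' bagB t) := by
  rcases h.torsoGraph_adj_mem_and_mem (Subtype.coe_image_subset _ _)
    (Subtype.coe_image_subset _ _) hSA hSB huv with
    ⟨⟨u, hu, rfl⟩, ⟨v, hv, rfl⟩⟩ | ⟨⟨u, hu, rfl⟩, ⟨v, hv, rfl⟩⟩
  · obtain ⟨t, hut, hvt⟩ := hA.edge_bag <| h.torsoGraph_restrictGraph_adj
      Set.subset_union_left (hSA.trans Set.subset_union_left) hu hv huv
    exact Or.inl ⟨t, ⟨u, hut, rfl⟩, ⟨v, hvt, rfl⟩⟩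
  · obtain ⟨t, hut, hvt⟩ := hB.edge_bag <| h.symm.torsoGraph_restrictGraph_adj
      Set.subset_union_right (hSB.trans Set.subset_union_right) hu hv huv
    exact Or.inr ⟨t, ⟨u, hut, rfl⟩, ⟨v, hvt, rfl⟩⟩

theorem combine_solutions_general {V : Type}
    (G : SimpleGraph V) (Ws : Set (Set V)) (k : ℕ)
    (A S B : Set V) (hsep : IsSeparation G A S B)
    {ιA ιB : Type}
    (TA : SimpleGraph ιA) (bagA : ιA → Set ↥(A ∪ S)) (XA : Set ↥(A ∪ S))
    (TB : SimpleGraph ιB) (bagB : ιB → Set ↥(B ∪ S)) (XB : Set ↥(B ∪ S))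
    (hA : IsSolutionTD (restrictGraph G A S) (restrictSets Ws A S) k XA TA bagA)
    (hB : IsSolutionTD (restrictGraph G B S) (restrictSets Ws B S) k XB TB bagB)
    (a0 : ιA) (ha0 : Subtype.val ⁻¹' S ⊆ bagA a0)
    (b0 : ιB) (hb0 : Subtype.val ⁻¹' S ⊆ bagB b0) :
    IsSolutionTD G Ws k (Subtype.val '' XA ∪ Subtype.val '' XB)
      (glueTrees TA TB a0 b0)
      (Sum.elim (fun t => Subtype.val '' bagA t) (fun t => Subtype.val '' bagB t)) := by
  have hSA : S ⊆ Subtype.val '' XA := Set.subset_image_val_of_preimage_val_subset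
    Set.subset_union_right (preimage_val_subset_sUnion_restrictSets.trans hA.2.1)
  have hSB : S ⊆ Subtype.val '' XB := Set.subset_image_val_of_preimage_val_subset
    Set.subset_union_right (preimage_val_subset_sUnion_restrictSets.trans hB.2.1)
  have hshared : Subtype.val '' XA ∩ Subtype.val '' XB ⊆ S := fun v hv =>
    hsep.mem_of_mem_union_of_mem_union (Subtype.coe_image_subset _ _ hv.1)
      (Subtype.coe_image_subset _ _ hv.2)
  refine ⟨hA.1.glueTrees hB.1
    (hshared.trans (Set.subset_image_val_of_preimage_val_subset Set.subset_union_right ha0))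
    (hshared.trans (Set.subset_image_val_of_preimage_val_subset Set.subset_union_right hb0))
    (hsep.torsoGraph_adj_mem_bags hA.1 hB.1 hSA hSB), ?_, ?_⟩
  · exact hsep.sUnion_subset_image_sUnion_restrictSets.trans
      (Set.union_subset_union (Set.image_mono hA.2.1) (Set.image_mono hB.2.1))
  · rintro (t | t)
    · exact (Set.ncard_image_of_injective _ Subtype.val_injective).trans_le (hA.2.2 t)
    · exact (Set.ncard_image_of_injective _ Subtype.val_injective).trans_le (hB.2.2 t)

/-- Combining solutions of `I ◁ (A, S)` and `I ◁ (B, S)` along `S` gives a solution of `I`: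
if `(X_A, (T_A, bag_A))` solves `I ◁ (A, S)` and `(X_B, (T_B, bag_B))` solves `I ◁ (B, S)`,
then gluing the two tree decompositions by an edge between a bag of `T_A` containing `S` and
a bag of `T_B` containing `S` yields the solution `(X_A ∪ X_B, (T_A, bag_A) ∪_S (T_B, bag_B))`
of `I`. -/
theorem combine_solutions {V : Type} [Fintype V]
    (G : SimpleGraph V) (Ws : Set (Set V)) (k : ℕ)
    (hI : IsPSTWInstance G Ws k)
    (A S B : Set V) (hsep : IsSeparation G A S B) (hScard : S.ncard ≤ k + 1)
    {ιA ιB : Type}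
    (TA : SimpleGraph ιA) (bagA : ιA → Set ↥(A ∪ S)) (XA : Set ↥(A ∪ S))
    (TB : SimpleGraph ιB) (bagB : ιB → Set ↥(B ∪ S)) (XB : Set ↥(B ∪ S))
    (hA : IsSolutionTD (restrictGraph G A S) (restrictSets Ws A S) k XA TA bagA)
    (hB : IsSolutionTD (restrictGraph G B S) (restrictSets Ws B S) k XB TB bagB)
    (a0 : ιA) (ha0 : Subtype.val ⁻¹' S ⊆ bagA a0)
    (b0 : ιB) (hb0 : Subtype.val ⁻¹' S ⊆ bagB b0) :
    IsSolutionTD G Ws k (Subtype.val '' XA ∪ Subtype.val '' XB)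
      (glueTrees TA TB a0 b0)
      (Sum.elim (fun t => Subtype.val '' bagA t) (fun t => Subtype.val '' bagB t)) :=
  combine_solutions_general G Ws k A S B hsep TA bagA XA TB bagB XB hA hB a0 ha0 b0 hb0
end

section
/- Let I = (G, {W_1, …, W_t}, k) be an instance of Partitioned Subset Treewidth, let (A, S, B) be a separation of G with |S| ≤ k+1, and let W_i be a terminal clique of both I and I ◁ (A,S) such that there exists another terminal clique W_j ≠ W_i of I ◁ (A,S) with W_j ⊇ S. Then flp_{I ◁ (A,S)}(W_i) ≥ flp_I(W_i). -/
open SimpleGraph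

variable {V ι : Type*}

/-
Proof idea: take a minimum separation `(A', S', B')` of `G ◁ (A, S)` witnessing the flow potential
of `W_i` there. Since `S` lies in another terminal clique `W_j`, it lies on the `B'`-side, so `A'`
avoids `S`; hence `A' ⊆ A` has no neighbours in `B`, and `(A', S', B' ∪ B)` is a separation of `G`
of the same order. It separates `W_i` from every other terminal clique `W` of `I`: either `W`
meets `A`, and then it is a terminal clique of `I ◁ (A, S)` (a clique meeting `A` lies in `A ∪ S`),
or `W ∩ (A ∪ S) ⊆ S`.
-/

open Set

namespace IsSeparation

variable {V : Type*} {G : SimpleGraph V} {A S B : Set V}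

lemma mem_or_mem_or_mem (h : IsSeparation G A S B) (v : V) : v ∈ A ∨ v ∈ S ∨ v ∈ B := by
  have hv : v ∈ A ∪ S ∪ B := h.union_eq ▸ mem_univ v
  rcases hv with (hA | hS) | hB
  exacts [Or.inl hA, Or.inr (Or.inl hS), Or.inr (Or.inr hB)]

lemma subset_union_of_isClique (h : IsSeparation G A S B) {W : Set V} (hW : G.IsClique W)
    (hWA : (W ∩ A).Nonempty) : W ⊆ A ∪ S := by
  obtain ⟨a, haW, haA⟩ := hWA
  intro v hv
  rcases h.mem_or_mem_or_mem v with hvA | hvS | hvB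
  · exact Or.inl hvA
  · exact Or.inr hvS
  · have hav : a ≠ v := fun hav => disjoint_left.mp h.disjoint_AB haA (hav ▸ hvB)
    exact absurd (hW haW hv hav) (h.no_adj haA hvB)

lemma compl (G : SimpleGraph V) (X : Set V) : IsSeparation G ∅ X Xᶜ where
  disjoint_AS := empty_disjoint _
  disjoint_AB := empty_disjoint _
  disjoint_SB := disjoint_compl_right
  union_eq := by simp
  no_adj _ _ ha := absurd ha (notMem_empty _)

lemma lift_restrictGraph (h : IsSeparation G A S B) {A' S' B' : Set ↥(A ∪ S)}
    (h' : IsSeparation (restrictGraph G A S) A' S' B') (hS : Subtype.val ⁻¹' S ⊆ B' ∪ S') :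
    IsSeparation G (Subtype.val '' A') (Subtype.val '' S') (Subtype.val '' B' ∪ B) := by
  have hA'A : Subtype.val '' A' ⊆ A := by
    rintro _ ⟨x, hxA', rfl⟩
    refine x.2.resolve_right fun hxS => ?_
    rcases hS hxS with hxB' | hxS'
    · exact disjoint_left.mp h'.disjoint_AB hxA' hxB'
    · exact disjoint_left.mp h'.disjoint_AS hxA' hxS'
  have hS'AS : Subtype.val '' S' ⊆ A ∪ S := by
    rintro _ ⟨x, -, rfl⟩
    exact x.2
  have hval := Subtype.val_injective (p := (· ∈ A ∪ S))
  refine ⟨(disjoint_image_iff hval).mpr h'.disjoint_AS,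
    disjoint_union_right.mpr ⟨(disjoint_image_iff hval).mpr h'.disjoint_AB,
      h.disjoint_AB.mono_left hA'A⟩,
    disjoint_union_right.mpr ⟨(disjoint_image_iff hval).mpr h'.disjoint_SB,
      (disjoint_union_left.mpr ⟨h.disjoint_AB, h.disjoint_SB⟩).mono_left hS'AS⟩, ?_, ?_⟩
  · rw [← union_assoc, ← image_union, ← image_union, h'.union_eq, image_univ,
      Subtype.range_coe, h.union_eq]
  · rintro _ b ⟨x, hxA', rfl⟩ (⟨y, hyB', rfl⟩ | hbB) hadj
    · exact h'.no_adj hxA' hyB' (Or.inl hadj)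
    · exact h.no_adj (hA'A ⟨x, hxA', rfl⟩) hbB hadj

end IsSeparation

section flpG

variable {V : Type*} {G : SimpleGraph V} {X Y : Set V}

lemma flpG_le_of_isSeparation (hX : X ≠ univ) {A S B : Set V} (h : IsSeparation G A S B)
    (hXAS : X ⊆ A ∪ S) (hYBS : Y ⊆ B ∪ S) (hB : B.Nonempty) : flpG G X Y ≤ S.ncard := by
  rw [flpG, if_neg hX]
  exact Nat.sInf_le ⟨A, S, B, h, hXAS, hYBS, hB, rfl⟩

lemma flpG_le_ncard : flpG G X Y ≤ X.ncard := by
  by_cases hX : X = univ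
  · rw [flpG, if_pos hX]
  · exact flpG_le_of_isSeparation hX (IsSeparation.compl G X) subset_union_right
      (by rw [compl_union_self]; exact subset_univ Y) (nonempty_compl.mpr hX)

lemma exists_isSeparation_ncard_eq_flpG (hX : X ≠ univ) :
    ∃ A S B, IsSeparation G A S B ∧ X ⊆ A ∪ S ∧ Y ⊆ B ∪ S ∧ B.Nonempty ∧
      S.ncard = flpG G X Y := by
  rw [flpG, if_neg hX]
  exact Nat.sInf_mem (s := {n | ∃ A S B, IsSeparation G A S B ∧ X ⊆ A ∪ S ∧ Y ⊆ B ∪ S ∧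
    B.Nonempty ∧ S.ncard = n}) ⟨_, ∅, X, Xᶜ, IsSeparation.compl G X, subset_union_right,
    by rw [compl_union_self]; exact subset_univ Y, nonempty_compl.mpr hX, rfl⟩

lemma flpG_le_flpG_restrictGraph {A S B : Set V} (hsep : IsSeparation G A S B)
    {Y' : Set ↥(A ∪ S)} (hXAS : X ⊆ A ∪ S) (hSY' : Subtype.val ⁻¹' S ⊆ Y')
    (hYA : Y ∩ A ⊆ Subtype.val '' Y') :
    flpG G X Y ≤ flpG (restrictGraph G A S) (Subtype.val ⁻¹' X) Y' := by
  by_cases hX' : (Subtype.val ⁻¹' X : Set ↥(A ∪ S)) = univ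
  · rw [show flpG (restrictGraph G A S) _ Y' = _ from if_pos hX',
      ncard_preimage_of_injective_subset_range Subtype.val_injective (by rwa [Subtype.range_coe])]
    exact flpG_le_ncard
  have hX : X ≠ univ := fun hX => hX' (by rw [hX, preimage_univ])
  obtain ⟨A', S', B', h', hXA'S', hY'B'S', ⟨b, hb⟩, hS'⟩ :=
    exists_isSeparation_ncard_eq_flpG (G := restrictGraph G A S) (Y := Y') hX'
  rw [← hS', ← ncard_image_of_injective S' Subtype.val_injective]
  refine flpG_le_of_isSeparation hX (hsep.lift_restrictGraph h' (hSY'.trans hY'B'S')) ?_ ?_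
    ⟨b, Or.inl ⟨b, hb, rfl⟩⟩
  · intro v hv
    rcases hXA'S' (show (⟨v, hXAS hv⟩ : ↥(A ∪ S)) ∈ Subtype.val ⁻¹' X from hv) with h | h
    exacts [Or.inl ⟨_, h, rfl⟩, Or.inr ⟨_, h, rfl⟩]
  · intro v hv
    rcases hsep.mem_or_mem_or_mem v with hvA | hvS | hvB
    · obtain ⟨y, hy, rfl⟩ := hYA ⟨hv, hvA⟩
      rcases hY'B'S' hy with h | h
      exacts [Or.inl (Or.inl ⟨y, h, rfl⟩), Or.inr ⟨y, h, rfl⟩]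
    · rcases hSY'.trans hY'B'S' (show (⟨v, Or.inr hvS⟩ : ↥(A ∪ S)) ∈ _ from hvS) with h | h
      exacts [Or.inl (Or.inl ⟨_, h, rfl⟩), Or.inr ⟨_, h, rfl⟩]
    · exact Or.inl (Or.inr hvB)

end flpG

section restrictCliques

variable {V : Type*} {G : SimpleGraph V} {Ws : Set (Set V)} {A S B W Wi : Set V}

lemma subset_union_of_mem_restrictCliques (hsep : IsSeparation G A S B)
    (hcl : ∀ W ∈ Ws, G.IsClique W) (hW : W ∈ restrictCliques Ws A S) : W ⊆ A ∪ S := by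
  rcases hW with ⟨hWs, hWA⟩ | ⟨rfl, -⟩
  exacts [hsep.subset_union_of_isClique (hcl W hWs) hWA, subset_union_right]

lemma preimage_subset_otherUnion_restrictSets (hsep : IsSeparation G A S B)
    (hcl : ∀ W ∈ Ws, G.IsClique W) (hWi : Wi ∈ restrictCliques Ws A S)
    (hW : W ∈ restrictCliques Ws A S) (hne : W ≠ Wi) :
    (Subtype.val ⁻¹' W : Set ↥(A ∪ S)) ⊆
      otherUnion (restrictSets Ws A S) (Subtype.val ⁻¹' Wi) := by
  refine fun x hx => mem_sUnion.mpr ⟨_, ⟨⟨W, hW, rfl⟩, fun heq => hne ?_⟩, hx⟩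
  rw [mem_singleton_iff, Subtype.preimage_coe_eq_preimage_coe_iff] at heq
  rwa [inter_eq_right.mpr (subset_union_of_mem_restrictCliques hsep hcl hW),
    inter_eq_right.mpr (subset_union_of_mem_restrictCliques hsep hcl hWi)] at heq

end restrictCliques

theorem restrict_flp_of_superset_general {V : Type}
    (G : SimpleGraph V) (Ws : Set (Set V)) (k : ℕ)
    (hI : IsPSTWInstance G Ws k)
    (A S B : Set V) (hsep : IsSeparation G A S B)
    (Wi : Set V) (hWi' : Wi ∈ restrictCliques Ws A S)
    (hWj : ∃ Wj ∈ restrictCliques Ws A S, Wj ≠ Wi ∧ S ⊆ Wj) :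
    flpInst G Ws Wi
      ≤ flpInst (restrictGraph G A S) (restrictSets Ws A S) (Subtype.val ⁻¹' Wi) := by
  have hcl : ∀ W ∈ Ws, G.IsClique W := fun W hW => (hI.2.2.2 W hW).1
  obtain ⟨Wj, hWj, hWji, hSWj⟩ := hWj
  refine flpG_le_flpG_restrictGraph hsep (subset_union_of_mem_restrictCliques hsep hcl hWi')
    ((preimage_mono hSWj).trans
      (preimage_subset_otherUnion_restrictSets hsep hcl hWi' hWj hWji)) ?_
  rintro v ⟨⟨W, ⟨hW, hWi⟩, hvW⟩, hvA⟩
  have hWr : W ∈ restrictCliques Ws A S := Or.inl ⟨hW, v, hvW, hvA⟩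
  exact ⟨⟨v, Or.inl hvA⟩,
    preimage_subset_otherUnion_restrictSets hsep hcl hWi' hWr hWi hvW, rfl⟩

/-- If `(A, S, B)` is a separation of `G` with `|S| ≤ k + 1`, `W_i` is a terminal clique of
both `I` and `I ◁ (A, S)`, and some other terminal clique `W_j ≠ W_i` of `I ◁ (A, S)` is a
superset of `S`, then `flp_{I ◁ (A,S)}(W_i) ≥ flp_I(W_i)`. -/
theorem restrict_flp_of_superset {V : Type} [Fintype V]
    (G : SimpleGraph V) (Ws : Set (Set V)) (k : ℕ)
    (hI : IsPSTWInstance G Ws k)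
    (A S B : Set V) (hsep : IsSeparation G A S B) (hScard : S.ncard ≤ k + 1)
    (Wi : Set V) (hWi : Wi ∈ Ws) (hWi' : Wi ∈ restrictCliques Ws A S)
    (hWj : ∃ Wj ∈ restrictCliques Ws A S, Wj ≠ Wi ∧ S ⊆ Wj) :
    flpInst G Ws Wi
      ≤ flpInst (restrictGraph G A S) (restrictSets Ws A S) (Subtype.val ⁻¹' Wi) :=
  restrict_flp_of_superset_general G Ws k hI A S B hsep Wi hWi' hWj
end

section
/- Let I = (G, {W_1, …, W_t}, k) be a yes-instance of Partitioned Subset Treewidth that is maximally merged and has t ≥ 2 terminal cliques. Then I has at least two potential forget-cliques. -/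
open SimpleGraph

variable {V ι : Type*}

/-!
Take a solution `(X, (T, bag))` with `|X|` as small as possible and root `T` at any node `r`. By
maximal merging no bag holds two terminal cliques, so `bag r` misses some vertex of `X`. Among
the vertices of `X`, pick `v` whose subtree of bags starts deepest, at the bag `s`. The subtree of
every torso neighbour of `v` meets that of `v` and starts no deeper, so it contains `s`: the closed
torso neighbourhood of `v` lies in `bag s`, and `v ∉ bag r`. If `v` were not a terminal, deleting
it from `X` would give a smaller solution; so `v` lies in a terminal clique `W`, which is then
inside `bag s`, and by maximal merging in no other one. Hanging a copy of `bag s` below `s` as a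
leaf and forgetting `v` in all other bags exhibits `W` as a potential forget-clique. Rooting `T`
at `s` instead yields a second such clique, whose private vertex lies outside `bag s ⊇ W`.
-/

namespace SimpleGraph.IsTree

variable {T : SimpleGraph ι} (hT : T.IsTree)
include hT

theorem eq_of_isPath {u v : ι} {p q : T.Walk u v} (hp : p.IsPath) (hq : q.IsPath) : p = q :=
  congrArg Subtype.val ((hT.isAcyclic.subsingleton_path u v).elim ⟨p, hp⟩ ⟨q, hq⟩)

theorem length_eq_dist {u v : ι} {p : T.Walk u v} (hp : p.IsPath) : p.length = T.dist u v := by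
  obtain ⟨q, hq⟩ := hT.connected.exists_walk_length_eq_dist u v
  rw [hT.eq_of_isPath hp (q.isPath_of_length_eq_dist hq), hq]

theorem dist_add_dist_of_mem_support {u v c : ι} {p : T.Walk u v} (hp : p.IsPath)
    (hc : c ∈ p.support) : T.dist u c + T.dist c v = T.dist u v := by
  classical
  rw [← hT.length_eq_dist hp, ← hT.length_eq_dist (hp.takeUntil hc),
    ← hT.length_eq_dist (hp.dropUntil hc), ← Walk.length_append, Walk.take_spec]

theorem support_subset_of_connected_induce {A : Set ι} (hA : (T.induce A).Connected) {u v : ι}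
    (hu : u ∈ A) (hv : v ∈ A) {p : T.Walk u v} (hp : p.IsPath) : ∀ z ∈ p.support, z ∈ A := by
  obtain ⟨q, hq⟩ := hA.exists_isPath ⟨u, hu⟩ ⟨v, hv⟩
  have hq' : (q.map (Embedding.induce A).toHom : T.Walk u v).IsPath :=
    hq.map (Embedding.induce (G := T) A).injective
  intro z hz
  have hz' : z ∈ (q.map (Embedding.induce (G := T) A).toHom).support :=
    hT.eq_of_isPath hp hq' ▸ hz
  rw [Walk.support_map, List.mem_map] at hz'
  obtain ⟨z', -, rfl⟩ := hz'
  exact z'.2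

/-- A shortest `r`–`g` path followed by a `g`–`z` path inside `A` is a path: a common vertex
would be a point of `A` nearer to `r` than `g`. -/
theorem mem_support_of_isMinOn {A : Set ι} (hA : (T.induce A).Connected) {r g z : ι}
    (hg : g ∈ A) (hmin : IsMinOn (T.dist r) A g) (hz : z ∈ A) {p : T.Walk r z}
    (hp : p.IsPath) : g ∈ p.support := by
  classical
  obtain ⟨p₁, hp₁⟩ := hT.connected.exists_walk_length_eq_dist r g
  have hp₁' := p₁.isPath_of_length_eq_dist hp₁
  obtain ⟨p₂, hp₂⟩ := hT.connected.exists_isPath g z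
  have hp₂A := hT.support_subset_of_connected_induce hA hg hz hp₂
  have hnodup₂ := hp₂.support_nodup
  rw [← p₂.cons_tail_support, List.nodup_cons] at hnodup₂
  have hdisj : ∀ c ∈ p₁.support, c ∉ p₂.support.tail := by
    intro c hc hc₂
    have hcA := hp₂A c (List.mem_of_mem_tail hc₂)
    have h₁ := hT.dist_add_dist_of_mem_support hp₁' hc
    have h₂ := isMinOn_iff.mp hmin c hcA
    have hcg : c = g := hT.connected.dist_eq_zero_iff.mp (by omega)
    exact hnodup₂.1 (hcg ▸ hc₂)
  have hpath : (p₁.append p₂).IsPath := by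
    rw [Walk.isPath_def, Walk.support_append]
    exact hp₁'.support_nodup.append hnodup₂.2 fun c hc hc₂ => hdisj c hc hc₂
  rw [hT.eq_of_isPath hp hpath, Walk.mem_support_append_iff]
  exact Or.inl p₁.end_mem_support

theorem mem_of_isMinOn_of_dist_le {A B : Set ι} (hA : (T.induce A).Connected)
    (hB : (T.induce B).Connected) {r g g' t : ι} (hg : g ∈ A) (hminA : IsMinOn (T.dist r) A g)
    (hg' : g' ∈ B) (hminB : IsMinOn (T.dist r) B g') (htA : t ∈ A) (htB : t ∈ B)
    (hle : T.dist r g' ≤ T.dist r g) : g ∈ B := by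
  classical
  obtain ⟨p, hp⟩ := hT.connected.exists_isPath r t
  have hgp := hT.mem_support_of_isMinOn hA hg hminA htA hp
  have hg'p := hT.mem_support_of_isMinOn hB hg' hminB htB hp
  rw [← p.take_spec hg'p, Walk.mem_support_append_iff] at hgp
  rcases hgp with hgp | hgp
  · have := hT.dist_add_dist_of_mem_support (hp.takeUntil hg'p) hgp
    rwa [hT.connected.dist_eq_zero_iff.mp (by omega : T.dist g g' = 0)]
  · exact hT.support_subset_of_connected_induce hB hg' htB (hp.dropUntil hg'p) g hgp

end SimpleGraph.IsTree

namespace SimpleGraph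

/-- `T` with a new vertex `none` attached as a pendant vertex to `s`. -/
def addLeaf (T : SimpleGraph ι) (s : ι) : SimpleGraph (Option ι) where
  Adj x y := match x, y with
    | some a, some b => T.Adj a b
    | some a, none => a = s
    | none, some b => b = s
    | none, none => False
  symm := ⟨by
    rintro (_ | a) (_ | b) h
    exacts [h, h, h, h.symm]⟩
  loopless := ⟨by
    rintro (_ | a) h
    exacts [h, T.ne_of_adj h rfl]⟩

variable {T : SimpleGraph ι} {s : ι}

@[simp] theorem addLeaf_adj_none_left {y : Option ι} : (addLeaf T s).Adj none y ↔ y = some s := by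
  cases y <;> simp [addLeaf]

@[simp] theorem addLeaf_adj_none_right {x : Option ι} : (addLeaf T s).Adj x none ↔ x = some s := by
  rw [adj_comm, addLeaf_adj_none_left]

def addLeafComplHom (T : SimpleGraph ι) (s : ι) : (addLeaf T s).induce {none}ᶜ →g T where
  toFun x := x.1.getD s
  map_rel' := by
    rintro ⟨_ | a, ha⟩ ⟨_ | b, hb⟩ h
    · exact absurd rfl ha
    · exact absurd rfl ha
    · exact absurd rfl hb
    · exact h

theorem addLeafComplHom_injective : Function.Injective (addLeafComplHom T s) := by
  rintro ⟨_ | a, ha⟩ ⟨_ | b, hb⟩ h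
  · exact absurd rfl ha
  · exact absurd rfl ha
  · exact absurd rfl hb
  · exact Subtype.ext (congrArg some h)

theorem IsAcyclic.addLeaf (hT : T.IsAcyclic) (s : ι) : (T.addLeaf s).IsAcyclic := by
  classical
  intro v c hc
  by_cases hn : none ∈ c.support
  · -- the leaf has a single neighbour, so no cycle can pass through it
    have hc' := hc.rotate hn
    have hnil := hc'.not_nil
    apply hc'.snd_ne_penultimate
    rw [addLeaf_adj_none_left.mp ((c.rotate none hn).adj_snd hnil),
      addLeaf_adj_none_right.mp ((c.rotate none hn).adj_penultimate hnil)]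
  · have hc' : (c.induce {none}ᶜ fun z hz => by rintro rfl; exact hn hz).IsCycle := by
      rw [← Walk.isCycle_map_iff_of_injective
        (f := (Embedding.induce (G := T.addLeaf s) {none}ᶜ).toHom) Subtype.val_injective,
        Walk.map_induce]
      exact hc
    exact (hT.comap (addLeafComplHom T s) addLeafComplHom_injective) _ hc'

theorem IsTree.addLeaf (hT : T.IsTree) (s : ι) : (T.addLeaf s).IsTree := by
  refine ⟨(connected_iff_exists_forall_reachable _).mpr ⟨some s, ?_⟩, hT.isAcyclic.addLeaf s⟩
  rintro (_ | a)
  · exact Adj.reachable (addLeaf_adj_none_right.mpr rfl)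
  · exact (hT.connected s a).map ⟨some, id⟩

theorem addLeaf_induce_connected {A : Set ι} (hA : (T.induce A).Connected) :
    ((T.addLeaf s).induce {o | o.elim (s ∈ A) (· ∈ A)}).Connected := by
  obtain ⟨⟨a₀, ha₀⟩⟩ := hA.nonempty
  let φ : T.induce A →g (T.addLeaf s).induce {o | o.elim (s ∈ A) (· ∈ A)} :=
    ⟨fun z => ⟨some z.1, z.2⟩, fun h => h⟩
  have reach_some (a : ι) (ha : a ∈ A) :
      ((T.addLeaf s).induce _).Reachable ⟨some a₀, ha₀⟩ ⟨some a, ha⟩ :=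
    (hA.preconnected ⟨a₀, ha₀⟩ ⟨a, ha⟩).map φ
  refine (connected_iff_exists_forall_reachable _).mpr ⟨⟨some a₀, ha₀⟩, ?_⟩
  rintro ⟨_ | a, ha⟩
  · exact (reach_some s ha).trans (Adj.reachable (addLeaf_adj_none_right (T := T).mpr rfl))
  · exact reach_some a ha

end SimpleGraph

section Torso

variable {G : SimpleGraph V} {X : Set V}

theorem torsoGraph_adj_of_adj {u v : V} (hu : u ∈ X) (hv : v ∈ X) (h : G.Adj u v) :
    (torsoGraph G X).Adj u v :=
  ⟨h.ne, hu, hv, h.toWalk, by simp⟩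

theorem torsoGraph_adj_of_mem_support {x u v : V} {p : G.Walk u v} (hp : p.IsPath)
    (hpX : ∀ w ∈ p.support, w = u ∨ w = v ∨ w ∉ X \ {x}) (hx : x ∈ p.support)
    (hu : u ∈ X) (hxX : x ∈ X) (hux : u ≠ x) (hvx : v ≠ x) : (torsoGraph G X).Adj u x := by
  classical
  refine ⟨hux, hu, hxX, p.takeUntil x hx, fun w hw => ?_⟩
  have hwv : w ≠ v := fun h => Walk.endpoint_notMem_support_takeUntil hp hx hvx (h ▸ hw)
  rcases hpX w (p.support_takeUntil_subset_support hx hw) with h | h | h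
  · exact Or.inl h
  · exact absurd h hwv
  · by_cases hwx : w = x
    · exact Or.inr (Or.inl hwx)
    · exact Or.inr (Or.inr fun hwX => h ⟨hwX, hwx⟩)

theorem torsoGraph_diff_singleton_adj {x u v : V} (hx : x ∈ X)
    (h : (torsoGraph G (X \ {x})).Adj u v) :
    (torsoGraph G X).Adj u v ∨ (torsoGraph G X).Adj u x ∧ (torsoGraph G X).Adj v x := by
  classical
  obtain ⟨hne, ⟨hu, hux⟩, ⟨hv, hvx⟩, q, hq⟩ := h
  set p := q.bypass
  have hp : p.IsPath := q.bypass_isPath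
  have hpX : ∀ w ∈ p.support, w = u ∨ w = v ∨ w ∉ X \ {x} :=
    fun w hw => hq w (q.support_bypass_subset_support hw)
  by_cases hxp : x ∈ p.support
  · refine Or.inr ⟨torsoGraph_adj_of_mem_support hp hpX hxp hu hx hux hvx, ?_⟩
    refine torsoGraph_adj_of_mem_support hp.reverse (fun w hw => ?_) (by simpa using hxp)
      hv hx hvx hux
    rw [Walk.support_reverse, List.mem_reverse] at hw
    have := hpX w hw
    tauto
  · refine Or.inl ⟨hne, hu, hv, p, fun w hw => (hpX w hw).imp_right (Or.imp_right ?_)⟩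
    exact fun hw' hwX => hw' ⟨hwX, fun hwx => hxp (hwx ▸ hw)⟩

theorem torsoGraph_addCliqueG_adj {S : Set V} (hS : S ⊆ X) {u v : V}
    (h : (torsoGraph (addCliqueG G S) X).Adj u v) :
    (torsoGraph G X).Adj u v ∨ u ∈ S ∧ v ∈ S := by
  obtain ⟨hne, hu, hv, p, hp⟩ := h
  by_cases hG : ∀ e ∈ p.edges, e ∈ G.edgeSet
  · exact Or.inl ⟨hne, hu, hv, p.transfer G hG, by rwa [Walk.support_transfer]⟩
  · push Not at hG
    obtain ⟨e, he, heG⟩ := hG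
    induction e using Sym2.ind with | _ x y => ?_
    obtain hxy | ⟨hxy, hxS, hyS⟩ := p.edges_subset_edgeSet he
    · exact absurd hxy heG
    have hend : ∀ z ∈ S, z ∈ p.support → z = u ∨ z = v := fun z hz hzp =>
      (hp z hzp).imp_right (Or.resolve_right · (not_not.mpr (hS hz)))
    rcases hend x hxS (p.fst_mem_support_of_mem_edges he) with rfl | rfl <;>
      rcases hend y hyS (p.snd_mem_support_of_mem_edges he) with rfl | rfl
    all_goals first | exact absurd rfl hxy | exact Or.inr ⟨‹_›, ‹_›⟩

end Torso

namespace IsTorsoTreeDecomp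

variable {G : SimpleGraph V} {X : Set V} {T : SimpleGraph ι} {bag : ι → Set V}

theorem addCliqueG (hD : IsTorsoTreeDecomp G X T bag) {S : Set V} {t : ι} (hS : S ⊆ bag t) :
    IsTorsoTreeDecomp (addCliqueG G S) X T bag where
  __ := hD
  edge_bag _ _ h := (torsoGraph_addCliqueG_adj (hS.trans (hD.bag_subset t)) h).elim
    (hD.edge_bag ·) fun huv => ⟨t, hS huv.1, hS huv.2⟩

theorem diff_singleton (hD : IsTorsoTreeDecomp G X T bag) {x : V} (hx : x ∈ X) {s : ι}
    (hN : (torsoGraph G X).neighborSet x ⊆ bag s) :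
    IsTorsoTreeDecomp G (X \ {x}) T (fun t => bag t \ {x}) where
  tree := hD.tree
  bag_subset t := Set.sdiff_subset_sdiff_left (hD.bag_subset t)
  mem_bag v hv := (hD.mem_bag v hv.1).imp fun _ ht => ⟨ht, hv.2⟩
  edge_bag u v h := by
    rcases torsoGraph_diff_singleton_adj hx h with h' | ⟨hu, hv⟩
    · obtain ⟨t, hut, hvt⟩ := hD.edge_bag h'
      exact ⟨t, ⟨hut, h.2.1.2⟩, ⟨hvt, h.2.2.1.2⟩⟩
    · exact ⟨s, ⟨hN hu.symm, h.2.1.2⟩, ⟨hN hv.symm, h.2.2.1.2⟩⟩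
  conn v hv := by
    have hset : {t | v ∈ bag t \ {x}} = {t | v ∈ bag t} := Set.ext fun _ => and_iff_left hv.2
    exact hset ▸ hD.conn v hv.1

theorem addLeaf (hD : IsTorsoTreeDecomp G X T bag) {w : V} {s : ι} (hw : w ∈ bag s)
    (hN : (torsoGraph G X).neighborSet w ⊆ bag s) :
    IsTorsoTreeDecomp G X (T.addLeaf s) (fun o => o.elim (bag s) fun t => bag t \ {w}) where
  tree := hD.tree.addLeaf s
  bag_subset
    | none => hD.bag_subset s
    | some t => Set.sdiff_subset.trans (hD.bag_subset t)
  mem_bag v hv := by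
    by_cases hvw : v = w
    · exact ⟨none, hvw ▸ hw⟩
    · obtain ⟨t, ht⟩ := hD.mem_bag v hv
      exact ⟨some t, ht, hvw⟩
  edge_bag u v h := by
    by_cases hu : u = w
    · exact ⟨none, hu ▸ hw, hN (hu ▸ h)⟩
    by_cases hv : v = w
    · exact ⟨none, hN (hv ▸ h.symm), hv ▸ hw⟩
    obtain ⟨t, hut, hvt⟩ := hD.edge_bag h
    exact ⟨some t, ⟨hut, hu⟩, ⟨hvt, hv⟩⟩
  conn v hv := by
    by_cases hvw : v = w
    · have : {o : Option ι | v ∈ o.elim (bag s) fun t => bag t \ {w}} = {none} := by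
        ext (_ | t) <;> simp [hvw, hw]
      rw [this]
      exact Connected.of_subsingleton
    · have : {o : Option ι | v ∈ o.elim (bag s) fun t => bag t \ {w}} =
          {o | o.elim (s ∈ {t | v ∈ bag t}) (· ∈ {t | v ∈ bag t})} := by
        ext (_ | t) <;> simp [hvw]
      exact this ▸ addLeaf_induce_connected (hD.conn v hv)

theorem exists_neighborSet_subset_bag [Finite V] (hD : IsTorsoTreeDecomp G X T bag) (r : ι)
    (hX : ¬ X ⊆ bag r) :
    ∃ v ∈ X, v ∉ bag r ∧ ∃ s, v ∈ bag s ∧ (torsoGraph G X).neighborSet v ⊆ bag s := by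
  let depth (v : V) : ℕ := sInf (T.dist r '' {t | v ∈ bag t})
  have depth_le {v : V} {t : ι} (ht : v ∈ bag t) : depth v ≤ T.dist r t := Nat.sInf_le ⟨t, ht, rfl⟩
  have exists_top {v : V} (hv : v ∈ X) :
      ∃ g, v ∈ bag g ∧ T.dist r g = depth v ∧ IsMinOn (T.dist r) {t | v ∈ bag t} g := by
    obtain ⟨t, ht⟩ := hD.mem_bag v hv
    obtain ⟨g, hg, hgd⟩ := Nat.sInf_mem (s := T.dist r '' {t | v ∈ bag t}) ⟨_, t, ht, rfl⟩
    exact ⟨g, hg, hgd, isMinOn_iff.mpr fun t ht => hgd ▸ depth_le ht⟩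
  obtain ⟨x, hxX, hxr⟩ := Set.not_subset.mp hX
  obtain ⟨v, hvX, hvmax⟩ := Set.exists_max_image X depth X.toFinite ⟨x, hxX⟩
  obtain ⟨s, hvs, hsd, hsmin⟩ := exists_top hvX
  refine ⟨v, hvX, fun hvr => ?_, s, hvs, fun u hvu => ?_⟩
  · obtain ⟨g, hxg, hgd, -⟩ := exists_top hxX
    have hv0 : depth v = 0 := by simpa using depth_le hvr
    have hg : g = r := (hD.tree.connected.dist_eq_zero_iff.mp (by have := hvmax x hxX; omega)).symm
    exact hxr (hg ▸ hxg)
  · have huX : u ∈ X := hvu.2.2.1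
    obtain ⟨g, hug, hgd, hgmin⟩ := exists_top huX
    obtain ⟨t, hvt, hut⟩ := hD.edge_bag hvu
    exact hD.tree.mem_of_isMinOn_of_dist_le (hD.conn v hvX) (hD.conn u huX) hvs hsmin hug hgmin
      hvt hut (hgd ▸ hsd ▸ hvmax u huX)

end IsTorsoTreeDecomp

section PartitionedSubsetTreewidth

variable {G : SimpleGraph V} {Ws : Set (Set V)} {k : ℕ} {X : Set V} {κ : Type}
  {T : SimpleGraph κ} {bag : κ → Set V}

theorem MaximallyMerged.not_union_subset_bag [Finite V] (hmm : MaximallyMerged G Ws k)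
    (hsol : IsSolutionTD G Ws k X T bag) {Wi Wj : Set V} (hi : Wi ∈ Ws) (hj : Wj ∈ Ws)
    (hne : Wi ≠ Wj) (t : κ) : ¬ Wi ∪ Wj ⊆ bag t := by
  intro hsub
  refine hmm Wi hi Wj hj hne ((Set.ncard_le_ncard hsub).trans (hsol.2.2 t))
    ⟨κ, T, bag, X, hsol.1.addCliqueG hsub, ?_, hsol.2.2⟩
  rw [mergeCliques, Set.sUnion_insert]
  exact Set.union_subset (hsub.trans (hsol.1.bag_subset t))
    ((Set.sUnion_mono Set.sdiff_subset).trans hsol.2.1)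

theorem IsSolutionTD.isPotentialForgetClique (hsol : IsSolutionTD G Ws k X T bag) {W : Set V}
    {w : V} (hw : w ∈ W \ otherUnion Ws W) {s : κ} (hW : W ⊆ bag s)
    (hN : (torsoGraph G X).neighborSet w ⊆ bag s) : IsPotentialForgetClique G Ws k W :=
  ⟨Option κ, T.addLeaf s, _, X,
    ⟨hsol.1.addLeaf (hW hw.1) hN, hsol.2.1,
      fun | none => hsol.2.2 s | some t => (Set.ncard_sdiff_singleton_le _ _).trans (hsol.2.2 t)⟩,
    none, some s, addLeaf_adj_none_left.mpr rfl, fun _ => addLeaf_adj_none_left.mp, hW, w, hw, rfl⟩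

theorem IsYesInstance.exists_isSolutionTD_ncard_min (h : IsYesInstance G Ws k) :
    ∃ (κ : Type) (T : SimpleGraph κ) (bag : κ → Set V) (X : Set V), IsSolutionTD G Ws k X T bag ∧
      ∀ (κ' : Type) (T' : SimpleGraph κ') (bag' : κ' → Set V) (X' : Set V),
        IsSolutionTD G Ws k X' T' bag' → X.ncard ≤ X'.ncard := by
  classical
  obtain ⟨κ, T, bag, X, hsol⟩ := h
  have hP : ∃ n, ∃ (κ : Type) (T : SimpleGraph κ) (bag : κ → Set V) (X : Set V),
      IsSolutionTD G Ws k X T bag ∧ X.ncard = n := ⟨_, κ, T, bag, X, hsol, rfl⟩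
  obtain ⟨κ, T, bag, X, hsol, hX⟩ := Nat.find_spec hP
  exact ⟨κ, T, bag, X, hsol, fun κ' T' bag' X' h' =>
    hX ▸ Nat.find_min' hP ⟨κ', T', bag', X', h', rfl⟩⟩

theorem IsSolutionTD.exists_private_vertex [Finite V] (hI : IsPSTWInstance G Ws k)
    (hmm : MaximallyMerged G Ws k) (ht : 2 ≤ Ws.ncard) (hsol : IsSolutionTD G Ws k X T bag)
    (hmin : ∀ (κ' : Type) (T' : SimpleGraph κ') (bag' : κ' → Set V) (X' : Set V),
      IsSolutionTD G Ws k X' T' bag' → X.ncard ≤ X'.ncard) (r : κ) :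
    ∃ W ∈ Ws, ∃ w ∈ W \ otherUnion Ws W, w ∉ bag r ∧
      ∃ s, W ⊆ bag s ∧ (torsoGraph G X).neighborSet w ⊆ bag s := by
  obtain ⟨W₁, hW₁, W₂, hW₂, hne⟩ := (Set.one_lt_ncard hI.1).mp ht
  have hWX (W : Set V) (hW : W ∈ Ws) : W ⊆ X := (Set.subset_sUnion_of_mem hW).trans hsol.2.1
  have hXr : ¬ X ⊆ bag r := fun h => hmm.not_union_subset_bag hsol hW₁ hW₂ hne r
    (Set.union_subset ((hWX _ hW₁).trans h) ((hWX _ hW₂).trans h))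
  obtain ⟨v, hvX, hvr, s, hvs, hN⟩ := hsol.1.exists_neighborSet_subset_bag r hXr
  by_cases hv : v ∈ ⋃₀ Ws
  · obtain ⟨W, hW, hvW⟩ := hv
    have hclique {W' : Set V} (hW' : W' ∈ Ws) (hvW' : v ∈ W') : W' ⊆ bag s := by
      intro u hu
      by_cases huv : u = v
      · exact huv ▸ hvs
      exact hN (torsoGraph_adj_of_adj hvX (hWX W' hW' hu)
        ((hI.2.2.2 W' hW').1 hvW' hu (Ne.symm huv)))
    refine ⟨W, hW, v, ⟨hvW, ?_⟩, hvr, s, hclique hW hvW, hN⟩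
    rintro ⟨W', ⟨hW', hW'W⟩, hvW'⟩
    exact hmm.not_union_subset_bag hsol hW hW' (Ne.symm hW'W) s
      (Set.union_subset (hclique hW hvW) (hclique hW' hvW'))
  · have hsol' : IsSolutionTD G Ws k (X \ {v}) T fun t => bag t \ {v} :=
      ⟨hsol.1.diff_singleton hvX hN, fun u hu => ⟨hsol.2.1 hu, by rintro rfl; exact hv hu⟩,
        fun t => (Set.ncard_sdiff_singleton_le _ _).trans (hsol.2.2 t)⟩
    exact absurd (hmin _ _ _ _ hsol') (not_le.mpr (Set.ncard_sdiff_singleton_lt_of_mem hvX))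

end PartitionedSubsetTreewidth

/-- A maximally merged yes-instance of Partitioned Subset Treewidth with at least two terminal
cliques has at least two potential forget-cliques. -/
theorem two_potential_forget_cliques {V : Type} [Fintype V]
    (G : SimpleGraph V) (Ws : Set (Set V)) (k : ℕ)
    (hI : IsPSTWInstance G Ws k)
    (hyes : IsYesInstance G Ws k)
    (hmm : MaximallyMerged G Ws k)
    (ht : 2 ≤ Ws.ncard) :
    ∃ W1 ∈ Ws, ∃ W2 ∈ Ws, W1 ≠ W2 ∧
      IsPotentialForgetClique G Ws k W1 ∧ IsPotentialForgetClique G Ws k W2 := by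
  obtain ⟨κ, T, bag, X, hsol, hmin⟩ := hyes.exists_isSolutionTD_ncard_min
  obtain ⟨r⟩ := hsol.1.tree.connected.nonempty
  obtain ⟨W₁, hW₁, w₁, hw₁, -, s₁, hW₁s, hN₁⟩ := hsol.exists_private_vertex hI hmm ht hmin r
  obtain ⟨W₂, hW₂, w₂, hw₂, hw₂s₁, s₂, hW₂s, hN₂⟩ :=
    hsol.exists_private_vertex hI hmm ht hmin s₁
  refine ⟨W₁, hW₁, W₂, hW₂, ?_, hsol.isPotentialForgetClique hw₁ hW₁s hN₁,
    hsol.isPotentialForgetClique hw₂ hW₂s hN₂⟩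
  rintro rfl
  exact hw₂s₁ (hW₁s hw₂.1)
end
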